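/- arXiv:2311.10263 — 3 statements merged into one kernel-verified Lean document; each statement's English description precedes it below -/
import Mathlib

section
/- Let d ≥ 1 and let A ∈ ℝ^{d×d} have nonnegative entries. Then Tr(exp(A)) ≥ d, and Tr(exp(A)) = d if and only if A is acyclic. (This is the acyclicity characterization underlying the NO-TEARS constraint h_exp(A) = Tr(exp(A)) − d, which is the PST function with a_k = 1/k!.) -/
/-- `A` has a cycle of length `k`: there are indices `i₀, …, i_k` with `i₀ = i_k` and
`A (i_{ℓ-1}) (i_ℓ) > 0` for all `ℓ ∈ {1, …, k}`. -/
def hasCycle {d : ℕ} (A : Matrix (Fin d) (Fin d) ℝ) (k : ℕ) : Prop :=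
  ∃ p : ℕ → Fin d, p 0 = p k ∧ ∀ ℓ < k, 0 < A (p ℓ) (p (ℓ + 1))

/-- `A` is acyclic if it has no cycle of any length `k ≥ 1`. -/
def isAcyclic {d : ℕ} (A : Matrix (Fin d) (Fin d) ℝ) : Prop :=
  ∀ k, 1 ≤ k → ¬ hasCycle A k

open Matrix in
lemma pow_entry_nonneg {d : ℕ} (A : Matrix (Fin d) (Fin d) ℝ)
    (hA : ∀ i j, 0 ≤ A i j) : ∀ k i j, 0 ≤ (A ^ k) i j := by
  intro k
  induction k with
  | zero =>
    intro i j
    by_cases h : i = j <;> simp [pow_zero, Matrix.one_apply, h]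
  | succ n ih =>
    intro i j
    rw [pow_succ, Matrix.mul_apply]
    exact Finset.sum_nonneg fun m _ => mul_nonneg (ih i m) (hA m j)

open Matrix in
lemma prod_le_pow_entry {d : ℕ} (A : Matrix (Fin d) (Fin d) ℝ)
    (hA : ∀ i j, 0 ≤ A i j) (k : ℕ) (p : ℕ → Fin d) :
    (∏ ℓ ∈ Finset.range k, A (p ℓ) (p (ℓ + 1))) ≤ (A ^ k) (p 0) (p k) := by
  induction k with
  | zero => simp [pow_zero, Matrix.one_apply]
  | succ n ih =>
    rw [Finset.prod_range_succ, pow_succ, Matrix.mul_apply]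
    calc (∏ ℓ ∈ Finset.range n, A (p ℓ) (p (ℓ + 1))) * A (p n) (p (n + 1))
        ≤ (A ^ n) (p 0) (p n) * A (p n) (p (n + 1)) :=
          mul_le_mul_of_nonneg_right ih (hA _ _)
      _ ≤ ∑ m, (A ^ n) (p 0) m * A m (p (n + 1)) := by
          refine Finset.single_le_sum (f := fun m => (A ^ n) (p 0) m * A m (p (n + 1)))
            (fun m _ => mul_nonneg (pow_entry_nonneg A hA n _ _) (hA _ _)) (Finset.mem_univ (p n))

open Matrix in
lemma path_of_pow_entry_pos {d : ℕ} (A : Matrix (Fin d) (Fin d) ℝ)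
    (hA : ∀ i j, 0 ≤ A i j) :
    ∀ k i j, 0 < (A ^ k) i j →
      ∃ p : ℕ → Fin d, p 0 = i ∧ p k = j ∧ ∀ ℓ < k, 0 < A (p ℓ) (p (ℓ + 1)) := by
  intro k
  induction k with
  | zero =>
    intro i j h
    rw [pow_zero] at h
    by_cases hij : i = j
    · exact ⟨fun _ => i, rfl, hij.symm ▸ rfl, fun ℓ hℓ => absurd hℓ (Nat.not_lt_zero ℓ)⟩
    · simp [Matrix.one_apply, hij] at h
  | succ n ih =>
    intro i j h
    rw [pow_succ, Matrix.mul_apply] at h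
    obtain ⟨m, -, hm⟩ : ∃ m ∈ Finset.univ, 0 < (A ^ n) i m * A m j := by
      by_contra hc
      push_neg at hc
      have : ∑ m, (A ^ n) i m * A m j ≤ 0 :=
        Finset.sum_nonpos fun m hmem => le_of_not_gt fun hp => absurd hp (not_lt.2 (hc m hmem))
      linarith
    have h1 : 0 < (A ^ n) i m := by
      rcases lt_or_eq_of_le (pow_entry_nonneg A hA n i m) with h' | h'
      · exact h'
      · rw [← h', zero_mul] at hm; linarith
    have h2 : 0 < A m j := by
      rcases lt_or_eq_of_le (hA m j) with h' | h'
      · exact h'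
      · rw [← h', mul_zero] at hm; linarith
    obtain ⟨p, hp0, hpn, hps⟩ := ih i m h1
    refine ⟨fun ℓ => if ℓ ≤ n then p ℓ else j, by simp [hp0], by simp, ?_⟩
    intro ℓ hℓ
    rcases Nat.lt_or_ge ℓ n with hc | hc
    · simpa [Nat.le_of_lt hc, Nat.succ_le_of_lt hc] using hps ℓ hc
    · have hln : ℓ = n := Nat.le_antisymm (Nat.lt_succ_iff.1 hℓ) hc
      subst hln
      simpa [hpn] using h2

open Matrix NormedSpace in
theorem trace_exp_ge_and_eq_iff_isAcyclic
    {d : ℕ} (hd : 1 ≤ d) (A : Matrix (Fin d) (Fin d) ℝ)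
    (hA : ∀ i j, 0 ≤ A i j) :
    (d : ℝ) ≤ Matrix.trace (NormedSpace.exp A) ∧
      (Matrix.trace (NormedSpace.exp A) = d ↔ isAcyclic A) := by
  letI : NormedRing (Matrix (Fin d) (Fin d) ℝ) := Matrix.linftyOpNormedRing
  letI : NormedAlgebra ℝ (Matrix (Fin d) (Fin d) ℝ) := Matrix.linftyOpNormedAlgebra
  set f : ℕ → ℝ := fun n => (n.factorial : ℝ)⁻¹ * Matrix.trace (A ^ n) with hf_def
  have hf_nonneg : ∀ n, 0 ≤ f n := fun n =>
    mul_nonneg (inv_nonneg.2 (Nat.cast_nonneg _))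
      (Finset.sum_nonneg fun i _ => pow_entry_nonneg A hA n i i)
  -- trace of exp as a tsum
  have hsum : Summable fun n : ℕ => ((n.factorial : ℝ)⁻¹) • A ^ n :=
    NormedSpace.expSeries_summable' A
  have T : Matrix (Fin d) (Fin d) ℝ →L[ℝ] ℝ :=
    LinearMap.toContinuousLinearMap (Matrix.traceLinearMap (Fin d) ℝ ℝ)
  have htr : Matrix.trace (NormedSpace.exp A) = ∑' n : ℕ, f n := by
    have := ContinuousLinearMap.map_tsum
      (LinearMap.toContinuousLinearMap (Matrix.traceLinearMap (Fin d) ℝ ℝ)) hsum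
    rw [NormedSpace.exp_eq_tsum ℝ]
    simpa [Matrix.trace_smul, smul_eq_mul, hf_def] using this
  have hfs : Summable f := by
    have := hsum.map (LinearMap.toContinuousLinearMap (Matrix.traceLinearMap (Fin d) ℝ ℝ))
      (ContinuousLinearMap.continuous _)
    simpa [Function.comp_def, Matrix.traceLinearMap_apply, Matrix.trace_smul, smul_eq_mul, hf_def] using this
  have hf0 : f 0 = d := by
    simp [hf_def, Matrix.trace_one]
  have hge : (d : ℝ) ≤ Matrix.trace (NormedSpace.exp A) := by
    rw [htr, ← hf0]
    exact Summable.le_tsum hfs 0 fun n _ => hf_nonneg n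
  refine ⟨hge, ?_⟩
  have hfs' : Summable fun n => f (n + 1) := (summable_nat_add_iff 1).2 hfs
  have hsplit : ∑' n, f n = f 0 + ∑' n, f (n + 1) := Summable.tsum_eq_zero_add hfs
  constructor
  · -- equality → acyclic
    intro heq k hk ⟨p, hp, hps⟩
    have htail : ∑' n, f (n + 1) = 0 := by
      rw [htr, hsplit, hf0] at heq
      linarith
    have hzero : ∀ n, f (n + 1) = 0 := by
      intro n
      by_contra hne
      have hpos : 0 < ∑' n, f (n + 1) :=
        Summable.tsum_pos hfs' (fun m => hf_nonneg (m + 1)) n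
          (lt_of_le_of_ne (hf_nonneg (n + 1)) (Ne.symm hne))
      linarith
    obtain ⟨n, rfl⟩ := Nat.exists_eq_add_of_le hk
    have hdiag : 0 < (A ^ (1 + n)) (p 0) (p 0) := by
      have h1 : (0 : ℝ) < ∏ ℓ ∈ Finset.range (1 + n), A (p ℓ) (p (ℓ + 1)) :=
        Finset.prod_pos fun ℓ hℓ => hps ℓ (Finset.mem_range.1 hℓ)
      have h2 := prod_le_pow_entry A hA (1 + n) p
      rw [← hp] at h2
      linarith
    have htrpos : 0 < Matrix.trace (A ^ (1 + n)) := by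
      rw [Matrix.trace]
      exact Finset.sum_pos' (fun i _ => pow_entry_nonneg A hA _ i i)
        ⟨p 0, Finset.mem_univ _, hdiag⟩
    have := hzero n
    rw [hf_def] at this
    simp only [show n + 1 = 1 + n from Nat.add_comm n 1] at this
    have hfac : (0 : ℝ) < ((1 + n).factorial : ℝ)⁻¹ :=
      inv_pos.2 (Nat.cast_pos.2 (Nat.factorial_pos _))
    nlinarith
  · -- acyclic → equality
    intro hacyc
    have hzero : ∀ n, f (n + 1) = 0 := by
      intro n
      rw [hf_def]
      have htr0 : Matrix.trace (A ^ (n + 1)) = 0 := by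
        rw [Matrix.trace]
        refine Finset.sum_eq_zero fun i _ => ?_
        by_contra hne
        have hpos : 0 < (A ^ (n + 1)) i i :=
          lt_of_le_of_ne (pow_entry_nonneg A hA _ i i) (Ne.symm hne)
        obtain ⟨p, hp0, hpk, hps⟩ := path_of_pow_entry_pos A hA (n + 1) i i hpos
        exact hacyc (n + 1) (Nat.le_add_left 1 n) ⟨p, by rw [hp0, hpk], hps⟩
      simp [htr0]
    rw [htr, hsplit, hf0]
    have : ∑' n, f (n + 1) = 0 := by
      simp [hzero]
    rw [this, add_zero]
end

section
/- Let d ≥ 1 and let A ∈ ℝ^{d×d} have nonnegative entries such that every complex eigenvalue λ of A (i.e., every root of the characteristic polynomial of A over ℂ) satisfies |λ| < 1. Then I − A is invertible, Tr((I − A)^{−1}) ≥ d, and Tr((I − A)^{−1}) = d if and only if A is acyclic. (This is the acyclicity characterization underlying the constraint h_inv(A) = Tr((I − A)^{−1}) − d, which is the PST function with a_k = 1.) -/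
open Matrix Polynomial Filter Topology Finset

attribute [local instance] Matrix.linftyOpNormedRing Matrix.linftyOpNormedAlgebra

noncomputable section

namespace PSTaux

variable {d : ℕ}

instance : CompleteSpace (Matrix (Fin d) (Fin d) ℂ) := FiniteDimensional.complete ℂ _

lemma charpoly_eval (M : Matrix (Fin d) (Fin d) ℂ) (μ : ℂ) :
    M.charpoly.eval μ = (Matrix.scalar (Fin d) μ - M).det := by
  rw [Matrix.charpoly, ← Polynomial.coe_evalRingHom, RingHom.map_det]
  congr 1
  ext i j
  by_cases h : i = j <;>
    simp [h, charmatrix_apply, Matrix.scalar_apply, Matrix.diagonal_apply, Matrix.one_apply]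

lemma isRoot_of_mem_spectrum (M : Matrix (Fin d) (Fin d) ℂ) (μ : ℂ) (h : μ ∈ spectrum ℂ M) :
    M.charpoly.IsRoot μ := by
  rw [spectrum.mem_iff] at h
  rw [Polynomial.IsRoot, charpoly_eval]
  by_contra hdet
  exact h ((Matrix.isUnit_iff_isUnit_det _).mpr (isUnit_iff_ne_zero.mpr hdet))

lemma entry_le_norm (M : Matrix (Fin d) (Fin d) ℂ) (i j : Fin d) : ‖M i j‖ ≤ ‖M‖ := by
  rw [← coe_nnnorm, ← coe_nnnorm, NNReal.coe_le_coe, Matrix.linfty_opNNNorm_def]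
  calc ‖M i j‖₊ ≤ ∑ k, ‖M i k‖₊ :=
        Finset.single_le_sum (f := fun k => ‖M i k‖₊) (fun _ _ => zero_le) (Finset.mem_univ j)
  _ ≤ _ := Finset.le_sup (f := fun i => ∑ k, ‖M i k‖₊) (Finset.mem_univ i)

lemma exists_pow_norm_lt_one (hd : 1 ≤ d) (B : Matrix (Fin d) (Fin d) ℂ)
    (h : ∀ μ ∈ spectrum ℂ B, ‖μ‖ < 1) :
    ∃ N : ℕ, 1 ≤ N ∧ ‖B ^ N‖ < 1 := by
  haveI : Nonempty (Fin d) := Fin.pos_iff_nonempty.mp hd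
  have hr : spectralRadius ℂ B < 1 := by
    have := spectrum.spectralRadius_lt_of_forall_lt B (r := 1)
      (fun z hz => by simpa [← NNReal.coe_lt_coe, coe_nnnorm] using h z hz)
    simpa using this
  have hg := spectrum.pow_nnnorm_pow_one_div_tendsto_nhds_spectralRadius B
  have hev : ∀ᶠ n : ℕ in atTop, (‖B ^ n‖₊ : ENNReal) ^ (1 / (n:ℝ)) < 1 :=
    hg.eventually_lt_const hr
  obtain ⟨N, hN1, hN⟩ := ((eventually_ge_atTop 1).and hev).exists
  refine ⟨N, hN1, ?_⟩
  by_contra hge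
  push_neg at hge
  have h1 : (1 : ENNReal) ≤ (‖B ^ N‖₊ : ENNReal) := by
    rw [← ENNReal.coe_one, ENNReal.coe_le_coe]
    exact_mod_cast hge
  have : (1 : ENNReal) ≤ (‖B ^ N‖₊ : ENNReal) ^ (1 / (N:ℝ)) := by
    calc (1:ENNReal) = 1 ^ (1/(N:ℝ)) := by simp
    _ ≤ _ := ENNReal.rpow_le_rpow h1 (by positivity)
  exact absurd hN (not_lt.mpr this)

variable (A : Matrix (Fin d) (Fin d) ℝ)

lemma pow_nonneg' (hA : ∀ i j, 0 ≤ A i j) : ∀ k i j, 0 ≤ (A ^ k) i j := by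
  intro k
  induction k with
  | zero => intro i j; by_cases h : i = j <;> simp [h, Matrix.one_apply]
  | succ k ih =>
    intro i j
    rw [pow_succ, Matrix.mul_apply]
    exact Finset.sum_nonneg fun m _ => mul_nonneg (ih i m) (hA m j)

lemma pow_pos_of_path (hA : ∀ i j, 0 ≤ A i j) :
    ∀ k (p : ℕ → Fin d), (∀ ℓ < k, 0 < A (p ℓ) (p (ℓ + 1))) → 0 < (A ^ k) (p 0) (p k) := by
  intro k
  induction k with
  | zero => intro p _; simp [Matrix.one_apply]
  | succ k ih =>
    intro p hp
    rw [pow_succ, Matrix.mul_apply]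
    have h1 : 0 < (A ^ k) (p 0) (p k) := ih p (fun ℓ hℓ => hp ℓ (Nat.lt_succ_of_lt hℓ))
    have h2 : 0 < A (p k) (p (k + 1)) := hp k (Nat.lt_succ_self k)
    refine Finset.sum_pos' (fun m _ => mul_nonneg (pow_nonneg' A hA k _ _) (hA _ _)) ?_
    exact ⟨p k, Finset.mem_univ _, mul_pos h1 h2⟩

lemma path_of_pow_pos (hA : ∀ i j, 0 ≤ A i j) :
    ∀ k (i j : Fin d), 0 < (A ^ k) i j →
      ∃ p : ℕ → Fin d, p 0 = i ∧ p k = j ∧ ∀ ℓ < k, 0 < A (p ℓ) (p (ℓ + 1)) := by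
  intro k
  induction k with
  | zero =>
    intro i j h
    have hij : i = j := by
      by_contra hij
      rw [pow_zero, Matrix.one_apply_ne hij] at h
      exact lt_irrefl 0 h
    exact ⟨fun _ => i, rfl, hij ▸ rfl, by omega⟩
  | succ k ih =>
    intro i j h
    rw [pow_succ, Matrix.mul_apply] at h
    obtain ⟨m, _, hm⟩ : ∃ m ∈ Finset.univ, 0 < (A ^ k) i m * A m j := by
      by_contra hc
      push_neg at hc
      have : ∑ m, (A ^ k) i m * A m j ≤ 0 :=
        Finset.sum_nonpos fun m hm => hc m hm
      linarith
    have h1 : 0 < (A ^ k) i m := by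
      rcases lt_or_eq_of_le (pow_nonneg' A hA k i m) with h' | h'
      · exact h'
      · rw [← h'] at hm; simp at hm
    have h2 : 0 < A m j := by
      rcases lt_or_eq_of_le (hA m j) with h' | h'
      · exact h'
      · rw [← h'] at hm; simp at hm
    obtain ⟨p, hp0, hpk, hp⟩ := ih i m h1
    refine ⟨Function.update p (k + 1) j, ?_, ?_, ?_⟩
    · rw [Function.update_of_ne (by omega), hp0]
    · simp
    · intro ℓ hℓ
      rcases Nat.lt_succ_iff_lt_or_eq.mp hℓ with h' | h'
      · rw [Function.update_of_ne (by omega), Function.update_of_ne (by omega)]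
        exact hp ℓ h'
      · subst h'
        rw [Function.update_of_ne (by omega), Function.update_self, hpk]
        exact h2

end PSTaux

end

namespace PSTaux

lemma trace_pow_zero_iff_acyclic {d : ℕ} (A : Matrix (Fin d) (Fin d) ℝ)
    (hA : ∀ i j, 0 ≤ A i j) :
    (∀ k, 1 ≤ k → (A ^ k).trace = 0) ↔ isAcyclic A := by
  constructor
  · intro h k hk ⟨p, hp0, hp⟩
    have hpos : 0 < (A ^ k) (p 0) (p k) := pow_pos_of_path A hA k p hp
    rw [← hp0] at hpos
    have : 0 < (A ^ k).trace := by
      rw [Matrix.trace]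
      refine Finset.sum_pos' (fun i _ => pow_nonneg' A hA k i i) ⟨p 0, Finset.mem_univ _, hpos⟩
    rw [h k hk] at this; exact lt_irrefl 0 this
  · intro hac k hk
    rw [Matrix.trace]
    refine Finset.sum_eq_zero fun i _ => ?_
    by_contra hne
    have hpos : 0 < (A ^ k) i i := lt_of_le_of_ne (pow_nonneg' A hA k i i) (Ne.symm hne)
    obtain ⟨p, hp0, hpk, hp⟩ := path_of_pow_pos A hA k i i hpos
    exact hac k hk ⟨p, by rw [hp0, hpk], hp⟩

end PSTaux

theorem trace_inv_one_sub_ge_and_eq_iff_isAcyclic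
    {d : ℕ} (hd : 1 ≤ d) (A : Matrix (Fin d) (Fin d) ℝ)
    (hA : ∀ i j, 0 ≤ A i j)
    (hspec : ∀ μ : ℂ, ((A.map (Complex.ofReal : ℝ → ℂ)).charpoly.IsRoot μ) →
      ‖μ‖ < 1) :
    IsUnit (1 - A) ∧ (d : ℝ) ≤ Matrix.trace (1 - A)⁻¹ ∧
      (Matrix.trace (1 - A)⁻¹ = (d : ℝ) ↔ isAcyclic A) := by
  classical
  set B : Matrix (Fin d) (Fin d) ℂ := A.map (Complex.ofReal : ℝ → ℂ) with hB
  have hBf : B = Complex.ofRealHom.mapMatrix A := rfl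
  have hspB : ∀ μ ∈ spectrum ℂ B, ‖μ‖ < 1 := fun μ hμ =>
    hspec μ (PSTaux.isRoot_of_mem_spectrum B μ hμ)
  -- invertibility of 1 - B, hence 1 - A
  have h1B : IsUnit (1 - B) := by
    by_contra h
    have h1 : (1 : ℂ) ∈ spectrum ℂ B := by
      rw [spectrum.mem_iff]
      simpa using h
    simpa using hspB 1 h1
  have hmap1 : (1 : Matrix (Fin d) (Fin d) ℂ) - B = Complex.ofRealHom.mapMatrix (1 - A) := by
    rw [hBf, map_sub, _root_.map_one Complex.ofRealHom.mapMatrix]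
  have hdetB : (1 - B).det ≠ 0 := by
    intro h0
    have h2 := (Matrix.isUnit_iff_isUnit_det _).mp h1B
    rw [h0] at h2
    exact h2.ne_zero rfl
  have hdetA : IsUnit (1 - A).det := by
    rw [isUnit_iff_ne_zero]
    intro h0
    apply hdetB
    rw [hmap1, ← RingHom.map_det, h0, map_zero]
  have hUA : IsUnit (1 - A) := (Matrix.isUnit_iff_isUnit_det _).mpr hdetA
  -- Neumann setup
  obtain ⟨N, hN1, hNlt⟩ := PSTaux.exists_pow_norm_lt_one hd B hspB
  set r : ℝ := ‖B ^ N‖ with hr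
  have hr0 : 0 ≤ r := norm_nonneg _
  set C : Matrix (Fin d) (Fin d) ℝ := (1 - A)⁻¹ with hC
  set T : ℝ := Matrix.trace (1 - A)⁻¹ with hT
  set S : ℕ → ℝ := fun n => ∑ k ∈ Finset.range n, (A ^ k).trace with hS
  have hgeom : ∀ n, (1 - A) * (∑ k ∈ Finset.range n, A ^ k) = 1 - A ^ n := by
    intro n
    have h1 := mul_geom_sum A n
    rw [← neg_sub A 1, neg_mul, h1, neg_sub]
  have hSn : ∀ n, (∑ k ∈ Finset.range n, A ^ k) = C - C * A ^ n := by
    intro n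
    have h2 : C * ((1 - A) * (∑ k ∈ Finset.range n, A ^ k)) = C * (1 - A ^ n) := by
      rw [hgeom n]
    rwa [← mul_assoc, hC, Matrix.nonsing_inv_mul _ hdetA, one_mul, mul_sub, mul_one] at h2
  have hStrace : ∀ n, S n = T - (C * A ^ n).trace := by
    intro n
    simp only [hS]
    rw [← Matrix.trace_sum, hSn n, Matrix.trace_sub, hT, hC]
  -- entry bounds
  have hpowmap : ∀ m : ℕ, (A ^ m).map (Complex.ofReal : ℝ → ℂ) = B ^ m := by
    intro m
    rw [hBf, ← map_pow, RingHom.mapMatrix_apply]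
    rfl
  have hentry : ∀ j, 1 ≤ j → ∀ a b : Fin d, |(A ^ (N * j)) a b| ≤ r ^ j := by
    intro j hj a b
    have h1 : |(A ^ (N * j)) a b| = ‖(B ^ (N * j)) a b‖ := by
      rw [← hpowmap, Matrix.map_apply, Complex.norm_real, Real.norm_eq_abs]
    rw [h1]
    calc ‖(B ^ (N * j)) a b‖ ≤ ‖B ^ (N * j)‖ := PSTaux.entry_le_norm _ a b
    _ = ‖(B ^ N) ^ j‖ := by rw [← pow_mul]
    _ ≤ ‖B ^ N‖ ^ j := norm_pow_le' _ hj
  set K : ℝ := ∑ i, ∑ m, |C i m| with hK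
  have hgb : ∀ j, 1 ≤ j → |(C * A ^ (N * j)).trace| ≤ K * r ^ j := by
    intro j hj
    rw [Matrix.trace]
    calc |∑ i, (C * A ^ (N * j)).diag i| ≤ ∑ i, |(C * A ^ (N * j)).diag i| :=
          Finset.abs_sum_le_sum_abs _ _
    _ ≤ ∑ i, ∑ m, |C i m| * r ^ j := by
        refine Finset.sum_le_sum fun i _ => ?_
        rw [Matrix.diag_apply, Matrix.mul_apply]
        calc |∑ m, C i m * (A ^ (N * j)) m i| ≤ ∑ m, |C i m * (A ^ (N * j)) m i| :=
              Finset.abs_sum_le_sum_abs _ _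
        _ ≤ ∑ m, |C i m| * r ^ j := by
            refine Finset.sum_le_sum fun m _ => ?_
            rw [abs_mul]
            exact mul_le_mul_of_nonneg_left (hentry j hj m i) (abs_nonneg _)
    _ = K * r ^ j := by
        rw [hK, Finset.sum_mul]
        exact Finset.sum_congr rfl fun i _ => (Finset.sum_mul _ _ _).symm
  have hg0 : Tendsto (fun j => (C * A ^ (N * j)).trace) atTop (𝓝 0) := by
    have hKt : Tendsto (fun j : ℕ => K * r ^ j) atTop (𝓝 0) := by
      simpa using (tendsto_pow_atTop_nhds_zero_of_lt_one hr0 hNlt).const_mul K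
    refine squeeze_zero_norm' ?_ hKt
    filter_upwards [eventually_ge_atTop 1] with j hj
    simpa [Real.norm_eq_abs] using hgb j hj
  have hSconv : Tendsto (fun j => S (N * j)) atTop (𝓝 T) := by
    have heq : (fun j => S (N * j)) = fun j => T - (C * A ^ (N * j)).trace := by
      funext j; exact hStrace (N * j)
    rw [heq]
    simpa using (tendsto_const_nhds (x := T) (f := atTop)).sub hg0
  have htrace_nonneg : ∀ k, 0 ≤ (A ^ k).trace := fun k =>
    Finset.sum_nonneg fun i _ => PSTaux.pow_nonneg' A hA k i i
  have hmono : Monotone S := by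
    apply monotone_nat_of_le_succ
    intro n
    simp only [hS, Finset.sum_range_succ]
    linarith [htrace_nonneg n]
  have hle : ∀ n, S n ≤ T := by
    intro n
    have h1 : S n ≤ S (N * n) := hmono (Nat.le_mul_of_pos_left n (by omega))
    have hm2 : Monotone fun j => S (N * j) := fun a b hab => hmono (Nat.mul_le_mul_left N hab)
    exact h1.trans (hm2.ge_of_tendsto hSconv n)
  have hS1 : S 1 = (d : ℝ) := by
    simp only [hS]
    simp [Matrix.trace_one]
  refine ⟨hUA, hS1 ▸ hle 1, ?_, ?_⟩
  · intro hTd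
    rw [← PSTaux.trace_pow_zero_iff_acyclic A hA]
    intro k hk
    have hEq : S (k + 1) = S k + (A ^ k).trace := by
      simp only [hS]; exact Finset.sum_range_succ _ k
    have h1 : S (k + 1) ≤ T := hle (k + 1)
    have h2 : S 1 ≤ S k := hmono hk
    have h3 := htrace_nonneg k
    rw [hTd] at h1
    linarith
  · intro hac
    have hz := (PSTaux.trace_pow_zero_iff_acyclic A hA).mpr hac
    have hconst : ∀ n, 1 ≤ n → S n = (d : ℝ) := by
      intro n hn
      induction n with
      | zero => omega
      | succ m ih =>
        rcases Nat.eq_or_lt_of_le hn with h' | h'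
        · rw [← h']; exact hS1
        · have hm : 1 ≤ m := by omega
          have hEq : S (m + 1) = S m + (A ^ m).trace := by
            simp only [hS]; exact Finset.sum_range_succ _ m
          rw [hEq, ih hm, hz m hm, add_zero]
    have hconst' : Tendsto (fun j => S (N * j)) atTop (𝓝 (d : ℝ)) := by
      apply Tendsto.congr' _ tendsto_const_nhds
      filter_upwards [eventually_ge_atTop 1] with j hj
      exact (hconst (N * j) (Nat.one_le_iff_ne_zero.mpr (by positivity))).symm
    exact tendsto_nhds_unique hSconv hconst'
end

section
/- (V-instability of PST constraints.) Let d ≥ 2, let (a_k)_{k≥1} be a sequence of nonnegative reals, let C ∈ ℝ^{d×d} be the cyclic permutation matrix, and let u ∈ (0, 1] be such that S := Σ_{ℓ=1}^∞ a_{ℓd} · u^{ℓd} is finite. Then for every ε with 0 ≤ ε ≤ u², the PST function satisfies h_a(εC) ≤ ε^d · d · (S + a_d). In particular h_a(εC) = O(ε^d) as ε → 0⁺, so h_a vanishes at least as fast as ε^d along matrices that remain far from acyclic. -/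
open scoped ENNReal

/-- The Power Series Trace function `h_a(A) = Σ_{k=1}^∞ a_k · Tr(A^k)`, valued in `[0, ∞]`. -/
noncomputable def pst {d : ℕ} (a : ℕ → ℝ) (A : Matrix (Fin d) (Fin d) ℝ) : ℝ≥0∞ :=
  ∑' k : ℕ, ENNReal.ofReal (a (k + 1) * Matrix.trace (A ^ (k + 1)))

/-- The cyclic permutation matrix `C` of the directed cycle `0 → 1 → ⋯ → d-1 → 0`:
`C i j = 1` if `j = i + 1 (mod d)` and `0` otherwise. -/
def cycC (d : ℕ) : Matrix (Fin d) (Fin d) ℝ :=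
  fun i j => if (j : ℕ) = ((i : ℕ) + 1) % d then 1 else 0

lemma cycC_pow (d : ℕ) (hd : 0 < d) (k : ℕ) :
    (cycC d) ^ k = fun (i j : Fin d) => if (j : ℕ) = ((i : ℕ) + k) % d then (1:ℝ) else 0 := by
  induction k with
  | zero =>
    funext i j
    simp only [pow_zero, Nat.add_zero]
    rw [Matrix.one_apply]
    have hi : ((i : ℕ)) % d = i := Nat.mod_eq_of_lt i.isLt
    simp only [hi]
    by_cases h : i = j
    · simp [h]
    · have : (j : ℕ) ≠ (i : ℕ) := fun hh => h (Fin.ext hh.symm)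
      simp [h, this]
  | succ k ih =>
    funext i j
    rw [pow_succ, ih]
    show (∑ m : Fin d, (if (m:ℕ) = ((i:ℕ)+k) % d then (1:ℝ) else 0) * cycC d m j) = _
    have hlt : ((i:ℕ)+k) % d < d := Nat.mod_lt _ hd
    rw [Finset.sum_eq_single (⟨((i:ℕ)+k) % d, hlt⟩ : Fin d)]
    · simp only [if_pos rfl, one_mul, cycC]
      have hmod : (((i:ℕ)+k) % d + 1) % d = ((i:ℕ)+(k+1)) % d := by
        have h2 : ((i:ℕ)+k) % d + 1 ≡ ((i:ℕ)+k) + 1 [MOD d] :=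
          (Nat.mod_modEq _ d).add_right 1
        simpa [Nat.add_assoc] using h2
      rw [hmod]
      simp
    · intro b _ hb
      have : (b:ℕ) ≠ ((i:ℕ)+k) % d := fun h => hb (Fin.ext h)
      simp [this]
    · intro h; exact absurd (Finset.mem_univ _) h

lemma trace_cycC_pow (d : ℕ) (hd : 0 < d) (k : ℕ) :
    Matrix.trace ((cycC d) ^ k) = if d ∣ k then (d : ℝ) else 0 := by
  rw [cycC_pow d hd k]
  unfold Matrix.trace Matrix.diag
  by_cases h : d ∣ k
  · have key : ∀ i : Fin d, ((i:ℕ) + k) % d = i := by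
      intro i
      obtain ⟨c, rfl⟩ := h
      rw [Nat.add_mul_mod_self_left, Nat.mod_eq_of_lt i.isLt]
    simp [key, h]
  · have key : ∀ i : Fin d, ¬ ((i:ℕ) + k) % d = i := by
      intro i hi
      apply h
      have hmod : ((i:ℕ)+k) % d = (i:ℕ) % d := by rw [hi, Nat.mod_eq_of_lt i.isLt]
      have hdvd : d ∣ ((i:ℕ)+k) - (i:ℕ) :=
        (Nat.modEq_iff_dvd' (Nat.le_add_right _ _)).1 hmod.symm
      simpa using hdvd
    rw [if_neg h]
    have key2 : ∀ i : Fin d, (if (i:ℕ) = ((i:ℕ)+k) % d then (1:ℝ) else 0) = 0 :=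
      fun i => if_neg (fun hi => key i hi.symm)
    exact Finset.sum_eq_zero fun i _ => key2 i

/-- V-instability of PST constraints: along `ε • C` with `0 ≤ ε ≤ u²`, the PST function is
bounded by `ε^d · d · (S + a_d)` where `S = Σ_{ℓ=1}^∞ a_{ℓd} u^{ℓd}` is assumed finite. -/
theorem pst_smul_cycC_le
    {d : ℕ} (hd : 2 ≤ d) (a : ℕ → ℝ) (ha : ∀ k, 0 ≤ a k)
    (u : ℝ) (hu0 : 0 < u) (hu1 : u ≤ 1)
    (hS : Summable fun ℓ : ℕ => a ((ℓ + 1) * d) * u ^ ((ℓ + 1) * d))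
    (ε : ℝ) (hε0 : 0 ≤ ε) (hεu : ε ≤ u ^ 2) :
    pst a (ε • cycC d) ≤
      ENNReal.ofReal
        (ε ^ d * (d : ℝ) * ((∑' ℓ : ℕ, a ((ℓ + 1) * d) * u ^ ((ℓ + 1) * d)) + a d)) := by
  have hd0 : 0 < d := by omega
  have hdle : d ≤ 1 * d := by omega
  -- injectivity of the reindexing map
  have he : Function.Injective (fun ℓ : ℕ => (ℓ + 1) * d - 1) := by
    intro x y hxy
    have hx : 0 < (x + 1) * d := Nat.mul_pos (Nat.succ_pos x) hd0
    have hy : 0 < (y + 1) * d := Nat.mul_pos (Nat.succ_pos y) hd0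
    simp only at hxy
    have h2 : (x + 1) * d = (y + 1) * d := by omega
    have := Nat.eq_of_mul_eq_mul_right hd0 h2
    omega
  -- support condition
  have hsupp : Function.support
      (fun k : ℕ => ENNReal.ofReal (a (k + 1) * (ε ^ (k + 1) *
        (if d ∣ (k + 1) then (d : ℝ) else 0))))
      ⊆ Set.range (fun ℓ : ℕ => (ℓ + 1) * d - 1) := by
    intro k hk
    simp only [Function.mem_support] at hk
    have hdvd : d ∣ (k + 1) := by
      by_contra hnd
      simp [hnd] at hk
    obtain ⟨m, hm⟩ := hdvd
    rcases m with _ | m'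
    · omega
    · refine ⟨m', ?_⟩
      have hc : (m' + 1) * d = d * (m' + 1) := mul_comm _ _
      simp only
      omega
  -- termwise bound
  have hterm : ∀ ℓ : ℕ, a ((ℓ + 1) * d) * (ε ^ ((ℓ + 1) * d) * (d : ℝ)) ≤
      ε ^ d * (d : ℝ) * (a ((ℓ + 1) * d) * u ^ ((ℓ + 1) * d) +
        if ℓ = 0 then a d else 0) := by
    intro ℓ
    have hεd : (0:ℝ) ≤ ε ^ d * (d : ℝ) := by positivity
    rcases Nat.eq_zero_or_pos ℓ with hℓ | hℓ
    · subst hℓ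
      have h2 : (0:ℝ) ≤ a d * u ^ d := mul_nonneg (ha d) (pow_nonneg hu0.le d)
      have h01 : (0 + 1) * d = d := by omega
      rw [h01, if_pos rfl]
      nlinarith [mul_nonneg hεd h2]
    · have hℓ0 : ℓ ≠ 0 := Nat.pos_iff_ne_zero.mp hℓ
      rw [if_neg hℓ0, add_zero]
      set m := (ℓ + 1) * d with hmdef
      have h2d : 2 * d ≤ m := by
        have : 2 ≤ ℓ + 1 := by omega
        calc 2 * d ≤ (ℓ + 1) * d := Nat.mul_le_mul_right d this
        _ = m := rfl
      have hdm : d ≤ m := by omega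
      have hsplit : ε ^ m = ε ^ d * ε ^ (m - d) := by
        rw [← pow_add]; congr 1; omega
      have hεpow : ε ^ (m - d) ≤ u ^ m := by
        calc ε ^ (m - d) ≤ (u ^ 2) ^ (m - d) := pow_le_pow_left₀ hε0 hεu _
          _ = u ^ (2 * (m - d)) := by rw [← pow_mul]
          _ ≤ u ^ m := pow_le_pow_of_le_one hu0.le hu1 (by omega)
      have key : a m * ε ^ (m - d) ≤ a m * u ^ m :=
        mul_le_mul_of_nonneg_left hεpow (ha m)
      calc a m * (ε ^ m * (d : ℝ)) = ε ^ d * (d : ℝ) * (a m * ε ^ (m - d)) := by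
            rw [hsplit]; ring
        _ ≤ ε ^ d * (d : ℝ) * (a m * u ^ m) := mul_le_mul_of_nonneg_left key hεd
  -- summability of the bounding sequence
  have hy : Summable (fun ℓ : ℕ => if ℓ = 0 then a d else 0) := by
    apply summable_of_ne_finset_zero (s := {0})
    intro b hb
    simp only [Finset.mem_singleton] at hb
    simp [hb]
  have hsum : Summable (fun ℓ : ℕ => ε ^ d * (d : ℝ) *
      (a ((ℓ + 1) * d) * u ^ ((ℓ + 1) * d) + if ℓ = 0 then a d else 0)) :=
    (hS.add hy).mul_left _
  have hnn : ∀ ℓ : ℕ, 0 ≤ ε ^ d * (d : ℝ) *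
      (a ((ℓ + 1) * d) * u ^ ((ℓ + 1) * d) + if ℓ = 0 then a d else 0) := by
    intro ℓ
    have h1 : (0:ℝ) ≤ a ((ℓ+1)*d) * u ^ ((ℓ+1)*d) :=
      mul_nonneg (ha _) (pow_nonneg hu0.le _)
    have h2 : (0:ℝ) ≤ if ℓ = 0 then a d else 0 := by
      split <;> [exact ha d; exact le_refl 0]
    positivity
  calc pst a (ε • cycC d)
      = ∑' k : ℕ, ENNReal.ofReal (a (k + 1) * (ε ^ (k + 1) *
          (if d ∣ (k + 1) then (d : ℝ) else 0))) := by
        refine tsum_congr fun k => ?_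
        rw [smul_pow, Matrix.trace_smul, trace_cycC_pow d hd0, smul_eq_mul]
    _ = ∑' ℓ : ℕ, ENNReal.ofReal (a (((ℓ + 1) * d - 1) + 1) *
          (ε ^ (((ℓ + 1) * d - 1) + 1) *
          (if d ∣ (((ℓ + 1) * d - 1) + 1) then (d : ℝ) else 0))) :=
        (he.tsum_eq hsupp).symm
    _ = ∑' ℓ : ℕ, ENNReal.ofReal (a ((ℓ + 1) * d) * (ε ^ ((ℓ + 1) * d) * (d : ℝ))) := by
        refine tsum_congr fun ℓ => ?_
        have hpos : 0 < (ℓ + 1) * d := Nat.mul_pos (Nat.succ_pos ℓ) hd0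
        have h1 : (ℓ + 1) * d - 1 + 1 = (ℓ + 1) * d := by omega
        rw [h1, if_pos (Dvd.intro_left _ rfl)]
    _ ≤ ∑' ℓ : ℕ, ENNReal.ofReal (ε ^ d * (d : ℝ) *
          (a ((ℓ + 1) * d) * u ^ ((ℓ + 1) * d) + if ℓ = 0 then a d else 0)) :=
        ENNReal.tsum_le_tsum fun ℓ => ENNReal.ofReal_le_ofReal (hterm ℓ)
    _ = ENNReal.ofReal (∑' ℓ : ℕ, ε ^ d * (d : ℝ) *
          (a ((ℓ + 1) * d) * u ^ ((ℓ + 1) * d) + if ℓ = 0 then a d else 0)) :=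
        (ENNReal.ofReal_tsum_of_nonneg hnn hsum).symm
    _ = ENNReal.ofReal
        (ε ^ d * (d : ℝ) * ((∑' ℓ : ℕ, a ((ℓ + 1) * d) * u ^ ((ℓ + 1) * d)) + a d)) := by
        congr 1
        rw [tsum_mul_left, Summable.tsum_add hS hy, tsum_ite_eq]
end
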